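/- For n ≥ 2: if k > 0, the function h_k(t) = (∫₀ᵗ sin^{n-1}(√k r) dr)/sin^{n-1}(√k t) is strictly convex on (0, π/√k); if k < 0, the function h_k(t) = (∫₀ᵗ sinh^{n-1}(√(-k) r) dr)/sinh^{n-1}(√(-k) t) is strictly concave on (0, ∞); and h_0(t) = t/n is linear. -/

import Mathlib

/-! With `s = s_k`, `c = s_k'` (so that `c' = -k s` and `c² + k s² = 1`), `V = ∫₀ᵗ s^m` and
`h = V / s^m` for `m = n - 1`, one computes `h' = 1 - m V c / s^(m+1)` and `h'' = m N / s^(m+2)`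
with `N = V (1 + m c²) - c s^(m+1)`. Now `N 0 = 0` and `N' = 2 k s (s^(m+1) - m V c)`, and the last
factor is positive for `t > 0` while `s > 0`: trivially where `c ≤ 0`, and where `c > 0` because
`s^(m+1) / c - m V` vanishes at `0` and has derivative `s^m / c² > 0`. Hence `N`, and with it `h''`,
has the sign of `k`. For `k = 0`, `h t = (t^n / n) / t^(n-1)`. -/

/-- Generalized sine `s_k`. -/
noncomputable def sk (k t : ℝ) : ℝ :=
  if k = 0 then t
  else if 0 < k then Real.sin (Real.sqrt k * t) / Real.sqrt k
  else Real.sinh (Real.sqrt (-k) * t) / Real.sqrt (-k)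

/-- The volume-to-area ratio `h_k(t)` of geodesic balls in the space form of
curvature `k`. For `k > 0` it equals `(∫₀ᵗ sin^{n-1}(√k r) dr)/sin^{n-1}(√k t)`,
for `k < 0` the analogue with `sinh`, and `h_0(t) = t/n`. -/
noncomputable def hk (k : ℝ) (n : ℕ) (t : ℝ) : ℝ :=
  (∫ r in (0:ℝ)..t, sk k r ^ (n - 1)) / sk k t ^ (n - 1)

open Real Set intervalIntegral

lemma lt_of_hasDerivAt_pos {f f' : ℝ → ℝ} {a b : ℝ} (hab : a < b)
    (hf : ∀ x ∈ Icc a b, HasDerivAt f (f' x) x) (hf' : ∀ x ∈ Ioo a b, 0 < f' x) : f a < f b :=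
  strictMonoOn_of_hasDerivWithinAt_pos (convex_Icc a b)
    (fun x hx => (hf x hx).continuousAt.continuousWithinAt)
    (fun x hx => (hf x (interior_subset hx)).hasDerivWithinAt)
    (fun x hx => hf' x (by rwa [interior_Icc] at hx))
    (left_mem_Icc.2 hab.le) (right_mem_Icc.2 hab.le) hab

noncomputable def ck (k t : ℝ) : ℝ :=
  if k = 0 then 1
  else if 0 < k then cos (√k * t)
  else cosh (√(-k) * t)

noncomputable def skPowIntegral (k : ℝ) (m : ℕ) (t : ℝ) : ℝ :=
  ∫ r in (0:ℝ)..t, sk k r ^ m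

section
variable {k : ℝ}

lemma sk_of_pos (hpos : 0 < k) : sk k = fun t => sin (√k * t) / √k := by
  funext t; simp [sk, hpos.ne', hpos]

lemma ck_of_pos (hpos : 0 < k) : ck k = fun t => cos (√k * t) := by
  funext t; simp [ck, hpos.ne', hpos]

lemma sk_of_neg (hneg : k < 0) : sk k = fun t => sinh (√(-k) * t) / √(-k) := by
  funext t; simp [sk, hneg.ne, hneg.not_gt]

lemma ck_of_neg (hneg : k < 0) : ck k = fun t => cosh (√(-k) * t) := by
  funext t; simp [ck, hneg.ne, hneg.not_gt]

lemma sk_zero_left : sk 0 = fun t => t := by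
  funext t; simp [sk]

lemma ck_zero_left : ck 0 = fun _ => 1 := by
  funext t; simp [ck]

end

lemma hasDerivAt_sk (k t : ℝ) : HasDerivAt (sk k) (ck k t) t := by
  rcases lt_trichotomy k 0 with hneg | rfl | hpos
  · rw [sk_of_neg hneg, ck_of_neg hneg]
    have ha : √(-k) ≠ 0 := (sqrt_pos.2 (neg_pos.2 hneg)).ne'
    refine (((hasDerivAt_id' t).const_mul √(-k)).sinh.div_const √(-k)).congr_deriv ?_
    field_simp
  · simpa [sk_zero_left, ck_zero_left] using hasDerivAt_id' t
  · rw [sk_of_pos hpos, ck_of_pos hpos]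
    have ha : √k ≠ 0 := (sqrt_pos.2 hpos).ne'
    refine (((hasDerivAt_id' t).const_mul √k).sin.div_const √k).congr_deriv ?_
    field_simp

lemma hasDerivAt_ck (k t : ℝ) : HasDerivAt (ck k) (-k * sk k t) t := by
  rcases lt_trichotomy k 0 with hneg | rfl | hpos
  · rw [sk_of_neg hneg, ck_of_neg hneg]
    have ha : 0 < √(-k) := sqrt_pos.2 (neg_pos.2 hneg)
    refine ((hasDerivAt_id' t).const_mul √(-k)).cosh.congr_deriv ?_
    field_simp
    rw [sq_sqrt (neg_pos.2 hneg).le]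
    ring
  · simpa [ck_zero_left] using hasDerivAt_const t (1:ℝ)
  · rw [sk_of_pos hpos, ck_of_pos hpos]
    have ha : 0 < √k := sqrt_pos.2 hpos
    refine ((hasDerivAt_id' t).const_mul √k).cos.congr_deriv ?_
    field_simp
    rw [sq_sqrt hpos.le]
    ring

lemma ck_sq_add_mul_sk_sq (k t : ℝ) : ck k t ^ 2 + k * sk k t ^ 2 = 1 := by
  rcases lt_trichotomy k 0 with hneg | rfl | hpos
  · rw [sk_of_neg hneg, ck_of_neg hneg]
    have ha : 0 < √(-k) := sqrt_pos.2 (neg_pos.2 hneg)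
    field_simp
    rw [sq_sqrt (neg_pos.2 hneg).le]
    linear_combination -k * cosh_sq_sub_sinh_sq (√(-k) * t)
  · simp [ck]
  · rw [sk_of_pos hpos, ck_of_pos hpos]
    have ha : 0 < √k := sqrt_pos.2 hpos
    field_simp
    rw [sq_sqrt hpos.le]
    linear_combination k * cos_sq_add_sin_sq (√k * t)

lemma continuous_sk (k : ℝ) : Continuous (sk k) :=
  continuous_iff_continuousAt.2 fun t => (hasDerivAt_sk k t).continuousAt

lemma sk_zero (k : ℝ) : sk k 0 = 0 := by simp [sk]

lemma ck_zero (k : ℝ) : ck k 0 = 1 := by simp [ck]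

lemma hasDerivAt_skPowIntegral (k : ℝ) (m : ℕ) (t : ℝ) :
    HasDerivAt (skPowIntegral k m) (sk k t ^ m) t :=
  (((continuous_sk k).pow m).integral_hasStrictDerivAt 0 t).hasDerivAt

lemma skPowIntegral_zero (k : ℝ) (m : ℕ) : skPowIntegral k m 0 = 0 := by
  simp [skPowIntegral]

lemma hk_succ (k : ℝ) (m : ℕ) : hk k (m + 1) = fun t => skPowIntegral k m t / sk k t ^ m := by
  funext t; simp [hk, skPowIntegral]

noncomputable def hkDeriv (k : ℝ) (m : ℕ) (t : ℝ) : ℝ :=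
  1 - m * skPowIntegral k m t * ck k t / sk k t ^ (m + 1)

noncomputable def hkCurvNumer (k : ℝ) (m : ℕ) (t : ℝ) : ℝ :=
  skPowIntegral k m t * (1 + m * ck k t ^ 2) - ck k t * sk k t ^ (m + 1)

lemma hasDerivAt_hk {k t : ℝ} (m : ℕ) (hs : sk k t ≠ 0) :
    HasDerivAt (hk k (m + 1)) (hkDeriv k m t) t := by
  rw [hk_succ]
  refine ((hasDerivAt_skPowIntegral k m t).div ((hasDerivAt_sk k t).fun_pow m)
    (pow_ne_zero m hs)).congr_deriv ?_
  rcases m with _ | m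
  · simp [hkDeriv]
  · simp only [hkDeriv, add_tsub_cancel_right]
    field_simp
    ring

lemma hasDerivAt_hkDeriv {k t : ℝ} (m : ℕ) (hs : sk k t ≠ 0) :
    HasDerivAt (hkDeriv k m) (m * hkCurvNumer k m t / sk k t ^ (m + 2)) t := by
  have hnum := ((hasDerivAt_skPowIntegral k m t).const_mul (m : ℝ)).mul (hasDerivAt_ck k t)
  have hden := (hasDerivAt_sk k t).fun_pow (m + 1)
  refine ((hnum.div hden (pow_ne_zero _ hs)).const_sub 1).congr_deriv ?_
  simp only [hkCurvNumer, Pi.mul_apply, add_tsub_cancel_right]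
  push_cast
  field_simp
  linear_combination (m : ℝ) * sk k t ^ (2 * m + 2) * skPowIntegral k m t * ck_sq_add_mul_sk_sq k t

lemma iterate_deriv_hk {k x : ℝ} {U : Set ℝ} (m : ℕ) (hU : IsOpen U)
    (hs : ∀ y ∈ U, sk k y ≠ 0) (hx : x ∈ U) :
    deriv^[2] (hk k (m + 1)) x = m * hkCurvNumer k m x / sk k x ^ (m + 2) := by
  have hderiv : deriv (hk k (m + 1)) =ᶠ[nhds x] hkDeriv k m :=
    Filter.eventually_of_mem (hU.mem_nhds hx) fun y hy => (hasDerivAt_hk m (hs y hy)).deriv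
  show deriv (deriv _) x = _
  rw [hderiv.deriv_eq, (hasDerivAt_hkDeriv m (hs x hx)).deriv]

lemma continuousOn_hk {k : ℝ} {U : Set ℝ} (m : ℕ) (hs : ∀ y ∈ U, sk k y ≠ 0) :
    ContinuousOn (hk k (m + 1)) U :=
  fun x hx => (hasDerivAt_hk m (hs x hx)).continuousAt.continuousWithinAt

lemma skPowIntegral_nonneg {k t : ℝ} (m : ℕ) (ht : 0 ≤ t) (hs : ∀ r ∈ Icc 0 t, 0 ≤ sk k r) :
    0 ≤ skPowIntegral k m t :=
  integral_nonneg ht fun r hr => pow_nonneg (hs r hr) m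

lemma mul_skPowIntegral_mul_ck_lt {k t : ℝ} (m : ℕ) (ht : 0 < t)
    (hc : ∀ r ∈ Icc 0 t, 0 < ck k r) (hs : ∀ r ∈ Ioo 0 t, 0 < sk k r) :
    m * skPowIntegral k m t * ck k t < sk k t ^ (m + 1) := by
  have hderiv : ∀ r ∈ Icc 0 t, HasDerivAt
      (fun r => sk k r ^ (m + 1) / ck k r - m * skPowIntegral k m r)
      (sk k r ^ m / ck k r ^ 2) r := by
    intro r hr
    have hcr := (hc r hr).ne'
    refine ((((hasDerivAt_sk k r).fun_pow (m + 1)).div (hasDerivAt_ck k r) hcr).sub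
      ((hasDerivAt_skPowIntegral k m r).const_mul (m : ℝ))).congr_deriv ?_
    simp only [add_tsub_cancel_right]
    push_cast
    field_simp
    linear_combination sk k r ^ m * ck_sq_add_mul_sk_sq k r
  have hmono := lt_of_hasDerivAt_pos ht hderiv fun r hr =>
    div_pos (pow_pos (hs r hr) m) (pow_pos (hc r (Ioo_subset_Icc_self hr)) 2)
  have hct := hc t (right_mem_Icc.2 ht.le)
  have hfactor : sk k t ^ (m + 1) - m * skPowIntegral k m t * ck k t
      = ck k t * (sk k t ^ (m + 1) / ck k t - m * skPowIntegral k m t) := by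
    field_simp
  rw [← sub_pos, hfactor]
  exact mul_pos hct (by simpa [sk_zero, ck_zero, skPowIntegral_zero] using hmono)

section
variable {k t : ℝ}

lemma sk_pos_of_pos (hpos : 0 < k) (ht : t ∈ Ioo 0 (π / √k)) : 0 < sk k t := by
  have ha := sqrt_pos.2 hpos
  rw [sk_of_pos hpos]
  refine div_pos (sin_pos_of_pos_of_lt_pi (mul_pos ha ht.1) ?_) ha
  rw [← lt_div_iff₀' ha]
  exact ht.2

lemma ck_pos_of_pos (hpos : 0 < k) (ht : t ∈ Ico 0 (π / 2 / √k)) : 0 < ck k t := by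
  have ha := sqrt_pos.2 hpos
  rw [ck_of_pos hpos]
  refine cos_pos_of_mem_Ioo ⟨by linarith [pi_pos, mul_nonneg ha.le ht.1], ?_⟩
  rw [← lt_div_iff₀' ha]
  exact ht.2

lemma ck_nonpos_of_pos (hpos : 0 < k) (ht : t ∈ Icc (π / 2 / √k) (π / √k)) : ck k t ≤ 0 := by
  have ha := sqrt_pos.2 hpos
  rw [ck_of_pos hpos]
  refine cos_nonpos_of_pi_div_two_le_of_le ?_ ?_
  · rw [← div_le_iff₀' ha]
    exact ht.1
  · have : √k * t ≤ π := by
      rw [← le_div_iff₀' ha]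
      exact ht.2
    linarith [pi_pos]

lemma sk_pos_of_neg (hneg : k < 0) (ht : 0 < t) : 0 < sk k t := by
  have ha := sqrt_pos.2 (neg_pos.2 hneg)
  rw [sk_of_neg hneg]
  exact div_pos (sinh_pos_iff.2 (mul_pos ha ht)) ha

lemma ck_pos_of_neg (hneg : k < 0) : 0 < ck k t := by
  rw [ck_of_neg hneg]
  exact cosh_pos _

end

lemma mul_skPowIntegral_mul_ck_lt_of_pos {k t : ℝ} (m : ℕ) (hpos : 0 < k)
    (ht : t ∈ Ioo 0 (π / √k)) : m * skPowIntegral k m t * ck k t < sk k t ^ (m + 1) := by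
  have hst := sk_pos_of_pos hpos ht
  rcases lt_or_ge t (π / 2 / √k) with hlt | hge
  · refine mul_skPowIntegral_mul_ck_lt m ht.1 (fun r hr => ck_pos_of_pos hpos ⟨hr.1, ?_⟩)
      fun r hr => sk_pos_of_pos hpos ⟨hr.1, hr.2.trans ht.2⟩
    exact hr.2.trans_lt hlt
  · have hV : 0 ≤ skPowIntegral k m t := by
      refine skPowIntegral_nonneg m ht.1.le fun r hr => ?_
      rcases hr.1.eq_or_lt with rfl | hr0
      · rw [sk_zero]
      · exact (sk_pos_of_pos hpos ⟨hr0, hr.2.trans_lt ht.2⟩).le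
    have hc := ck_nonpos_of_pos hpos ⟨hge, ht.2.le⟩
    have : m * skPowIntegral k m t * ck k t ≤ 0 :=
      mul_nonpos_of_nonneg_of_nonpos (by positivity) hc
    linarith [pow_pos hst (m + 1)]

lemma hkCurvNumer_zero (k : ℝ) (m : ℕ) : hkCurvNumer k m 0 = 0 := by
  simp [hkCurvNumer, sk_zero, skPowIntegral_zero]

lemma hasDerivAt_hkCurvNumer (k : ℝ) (m : ℕ) (t : ℝ) :
    HasDerivAt (hkCurvNumer k m)
      (2 * k * sk k t * (sk k t ^ (m + 1) - m * skPowIntegral k m t * ck k t)) t := by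
  have hc2 := ((hasDerivAt_ck k t).fun_pow 2).const_mul (m : ℝ) |>.const_add 1
  have hs := (hasDerivAt_sk k t).fun_pow (m + 1)
  refine (((hasDerivAt_skPowIntegral k m t).mul hc2).sub
    ((hasDerivAt_ck k t).mul hs)).congr_deriv ?_
  simp only [add_tsub_cancel_right]
  push_cast
  linear_combination -sk k t ^ m * ck_sq_add_mul_sk_sq k t

lemma hkCurvNumer_pos_of_pos {k t : ℝ} (m : ℕ) (hpos : 0 < k) (ht : t ∈ Ioo 0 (π / √k)) :
    0 < hkCurvNumer k m t := by
  have hmono := lt_of_hasDerivAt_pos ht.1 (fun x _ => hasDerivAt_hkCurvNumer k m x)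
    fun x hx => by
      have hx' : x ∈ Ioo 0 (π / √k) := ⟨hx.1, hx.2.trans ht.2⟩
      exact mul_pos (mul_pos (by positivity) (sk_pos_of_pos hpos hx'))
        (sub_pos.2 (mul_skPowIntegral_mul_ck_lt_of_pos m hpos hx'))
  rwa [hkCurvNumer_zero] at hmono

lemma hkCurvNumer_neg_of_neg {k t : ℝ} (m : ℕ) (hneg : k < 0) (ht : 0 < t) :
    hkCurvNumer k m t < 0 := by
  have hmono := lt_of_hasDerivAt_pos ht (fun x _ => (hasDerivAt_hkCurvNumer k m x).neg)
    fun x hx => by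
      have hG := mul_skPowIntegral_mul_ck_lt m hx.1 (fun r _ => ck_pos_of_neg hneg)
        fun r hr => sk_pos_of_neg hneg hr.1
      have hsx := sk_pos_of_neg hneg hx.1
      have : 2 * k * sk k x * (sk k x ^ (m + 1) - m * skPowIntegral k m x * ck k x) < 0 :=
        mul_neg_of_neg_of_pos (mul_neg_of_neg_of_pos (by linarith) hsx) (sub_pos.2 hG)
      linarith
  simp only [Pi.neg_apply, hkCurvNumer_zero, neg_zero] at hmono
  linarith

lemma strictConvexOn_hk {k : ℝ} {m : ℕ} (hpos : 0 < k) (hm : m ≠ 0) :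
    StrictConvexOn ℝ (Ioo 0 (π / √k)) (hk k (m + 1)) := by
  have hs : ∀ y ∈ Ioo 0 (π / √k), sk k y ≠ 0 := fun y hy => (sk_pos_of_pos hpos hy).ne'
  refine strictConvexOn_of_deriv2_pos' (convex_Ioo _ _) (continuousOn_hk m hs) fun x hx => ?_
  rw [iterate_deriv_hk m isOpen_Ioo hs hx]
  exact div_pos (mul_pos (by positivity) (hkCurvNumer_pos_of_pos m hpos hx))
    (pow_pos (sk_pos_of_pos hpos hx) _)

lemma strictConcaveOn_hk {k : ℝ} {m : ℕ} (hneg : k < 0) (hm : m ≠ 0) :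
    StrictConcaveOn ℝ (Ioi 0) (hk k (m + 1)) := by
  have hs : ∀ y ∈ Ioi (0 : ℝ), sk k y ≠ 0 := fun y hy => (sk_pos_of_neg hneg hy).ne'
  refine strictConcaveOn_of_deriv2_neg' (convex_Ioi _) (continuousOn_hk m hs) fun x hx => ?_
  rw [iterate_deriv_hk m isOpen_Ioi hs hx]
  exact div_neg_of_neg_of_pos
    (mul_neg_of_pos_of_neg (by positivity) (hkCurvNumer_neg_of_neg m hneg hx))
    (pow_pos (sk_pos_of_neg hneg hx) _)

lemma hk_zero_left {n : ℕ} (hn : n ≠ 0) (t : ℝ) : hk 0 n t = t / n := by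
  obtain ⟨m, rfl⟩ := Nat.exists_eq_succ_of_ne_zero hn
  rcases eq_or_ne t 0 with rfl | ht
  · simp [hk_succ, sk_zero, skPowIntegral_zero]
  · simp only [hk_succ, skPowIntegral, sk_zero_left, integral_pow]
    push_cast
    field_simp
    ring

/-- `h_k` is strictly convex on `(0, π/√k)` for `k > 0`, strictly concave on
`(0, ∞)` for `k < 0`, and `h_0(t) = t/n` is linear. -/
theorem stmt_5 (n : ℕ) (hn : 2 ≤ n) (k : ℝ) :
    (0 < k → StrictConvexOn ℝ (Set.Ioo 0 (Real.pi / Real.sqrt k)) (hk k n)) ∧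
    (k < 0 → StrictConcaveOn ℝ (Set.Ioi 0) (hk k n)) ∧
    (∀ t : ℝ, hk 0 n t = t / n) := by
  obtain ⟨m, rfl⟩ : ∃ m, n = m + 1 := ⟨n - 1, by omega⟩
  have hm : m ≠ 0 := by omega
  exact ⟨fun hpos => strictConvexOn_hk hpos hm, fun hneg => strictConcaveOn_hk hneg hm,
    hk_zero_left m.succ_ne_zero⟩
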